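/- Fix a $\lambda$-tableau $\t_0$ and a bicomposition $(\alpha|\beta)$ of $n$, and let $\mathscr{R} = \{d \in \mathrm{Sym}_n : d^{-1} R_{\t_0} d \cap \mathrm{Sym}_{\alpha|\beta} \subseteq \mathrm{Sym}_{\alpha}\}$. For $d \in \mathrm{Sym}_n$, the following are equivalent: (a) $d \in \mathscr{R}$; (b) $\mathrm{stab}_{R_{\t_0}}(\mathrm{T}_d) \subseteq d\,\mathrm{Sym}_\alpha\,d^{-1}$; (c) whenever $\mathrm{T}_d(i,j) = \mathrm{T}_d(i,j')$ for nodes $(i,j),(i,j') \in [\lambda]$ with $j \ne j'$, the common value is one of the colours $\mathbf{c}_k$. -/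

import Mathlib

namespace SignedYoung
open Equiv Finset
open scoped Classical

abbrev Sym (n : ℕ) := Equiv.Perm (Fin n)

/-- Index of the block of the composition `γ` containing position `i` (0-based). -/
def blockOf (γ : List ℕ) (i : ℕ) : ℕ :=
  (List.range γ.length).countP (fun j => decide ((γ.take (j + 1)).sum ≤ i))

/-- The Young subgroup of `Sym n` associated to the composition `γ`. -/
def youngSubgroup (n : ℕ) (γ : List ℕ) : Subgroup (Sym n) where
  carrier := {σ | ∀ i : Fin n, blockOf γ (σ i) = blockOf γ i}
  one_mem' := by intro i; simp
  mul_mem' := by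
    intro a b ha hb i
    simp only [Equiv.Perm.mul_apply]
    rw [ha, hb]
  inv_mem' := by
    intro a ha i
    have h := ha (a⁻¹ i)
    rw [show a (a⁻¹ i) = i by simp] at h
    exact h.symm

/-- The subgroup `Sym_α` of the Young subgroup `Sym_{α|β}`: block-preserving permutations
fixing all points `≥ |α|`. -/
def symA (n : ℕ) (α β : List ℕ) : Set (Sym n) :=
  {σ | σ ∈ youngSubgroup n (α ++ β) ∧ ∀ i : Fin n, α.sum ≤ (i : ℕ) → σ i = i}

/-- The subgroup `Sym_β^{+|α|}`: block-preserving permutations fixing all points `< |α|`. -/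
def symB (n : ℕ) (α β : List ℕ) : Set (Sym n) :=
  {σ | σ ∈ youngSubgroup n (α ++ β) ∧ ∀ i : Fin n, (i : ℕ) < α.sum → σ i = i}

/-- Cells of the Young diagram of the composition `lam`. -/
abbrev Cell (lam : List ℕ) := (i : Fin lam.length) × Fin (lam.get i)

/-- A `lam`-tableau: a bijective labelling of the cells by `1, …, n` (here `Fin n`). -/
abbrev Tab (n : ℕ) (lam : List ℕ) := Cell lam ≃ Fin n

/-- The row stabilizer of a tableau. -/
def rowStab {n : ℕ} {lam : List ℕ} (t : Tab n lam) : Set (Sym n) :=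
  {σ | ∀ a : Fin n, (t.symm (σ a)).1 = (t.symm a).1}

/-- The column stabilizer of a tableau. -/
def colStab {n : ℕ} {lam : List ℕ} (t : Tab n lam) : Set (Sym n) :=
  {σ | ∀ a : Fin n, ((t.symm (σ a)).2 : ℕ) = ((t.symm a).2 : ℕ)}

/-- Colours `c_1 < c_2 < ⋯ < d_1 < d_2 < ⋯` (0-based). -/
abbrev Colour := Lex (ℕ ⊕ ℕ)

def cCol (k : ℕ) : Colour := toLex (Sum.inl k)

def dCol (k : ℕ) : Colour := toLex (Sum.inr k)

/-- `T` is a `lam`-tableau of type `(α|β)`: exactly `α_k` cells of colour `c_k` and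
`β_k` of colour `d_k`. -/
def HasType {lam : List ℕ} (α β : List ℕ) (T : Cell lam → Colour) : Prop :=
  (∀ k : ℕ, (Finset.univ.filter fun c => T c = cCol k).card = α.getD k 0) ∧
  (∀ k : ℕ, (Finset.univ.filter fun c => T c = dCol k).card = β.getD k 0)

/-- The colour of the number `i` under the canonical colouring by `(α|β)`. -/
def colourOfIdx (α β : List ℕ) (i : ℕ) : Colour :=
  if blockOf (α ++ β) i < α.length then cCol (blockOf (α ++ β) i)
  else dCol (blockOf (α ++ β) i - α.length)

/-- The canonical `lam`-tableau of type `(α|β)` associated to the tableau `t0`. -/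
def canonT {n : ℕ} {lam : List ℕ} (t0 : Tab n lam) (α β : List ℕ) : Cell lam → Colour :=
  fun c => colourOfIdx α β (t0 c)

/-- The action `σ · T = T ∘ t0⁻¹ ∘ σ⁻¹ ∘ t0` of `Sym n` on tableaux of type `(α|β)`,
through the fixed tableau `t0`. -/
def actT {n : ℕ} {lam : List ℕ} (t0 : Tab n lam) (σ : Sym n) (T : Cell lam → Colour) :
    Cell lam → Colour :=
  fun c => T (t0.symm (σ⁻¹ (t0 c)))

/-- `T_d = d · T_0`. -/
def TOf {n : ℕ} {lam : List ℕ} (t0 : Tab n lam) (α β : List ℕ) (d : Sym n) :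
    Cell lam → Colour :=
  actT t0 d (canonT t0 α β)

def RowSemistd {lam : List ℕ} (T : Cell lam → Colour) : Prop :=
  ∀ c c' : Cell lam, c.1 = c'.1 → (c.2 : ℕ) < (c'.2 : ℕ) → T c ≤ T c'

def ColSemistd {lam : List ℕ} (T : Cell lam → Colour) : Prop :=
  ∀ c c' : Cell lam, (c.2 : ℕ) = (c'.2 : ℕ) → c.1 < c'.1 → T c ≤ T c'

/-- Repeats in a row occur only for colours `c_k`. -/
def RowRepeatC {lam : List ℕ} (T : Cell lam → Colour) : Prop :=
  ∀ c c' : Cell lam, c.1 = c'.1 → (c.2 : ℕ) ≠ (c'.2 : ℕ) → T c = T c' → ∃ k, T c = cCol k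

/-- Repeats in a column occur only for colours `d_k`. -/
def ColRepeatD {lam : List ℕ} (T : Cell lam → Colour) : Prop :=
  ∀ c c' : Cell lam, (c.2 : ℕ) = (c'.2 : ℕ) → c.1 ≠ c'.1 → T c = T c' → ∃ k, T c = dCol k

def IsSemistd {lam : List ℕ} (T : Cell lam → Colour) : Prop :=
  RowSemistd T ∧ ColSemistd T ∧ RowRepeatC T ∧ ColRepeatD T

/-- A standard tableau: strictly increasing along rows and down columns. -/
def IsStd {n : ℕ} {lam : List ℕ} (t : Tab n lam) : Prop :=
  (∀ c c' : Cell lam, c.1 = c'.1 → (c.2 : ℕ) < (c'.2 : ℕ) → t c < t c') ∧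
  (∀ c c' : Cell lam, (c.2 : ℕ) = (c'.2 : ℕ) → c.1 < c'.1 → t c < t c')

def IsPartition (n : ℕ) (lam : List ℕ) : Prop :=
  lam.Pairwise (· ≥ ·) ∧ (∀ x ∈ lam, 0 < x) ∧ lam.sum = n

def IsBicomp (n : ℕ) (α β : List ℕ) : Prop :=
  (∀ x ∈ α, 0 < x) ∧ (∀ x ∈ β, 0 < x) ∧ α.sum + β.sum = n

/-- `𝒮 = {d : d⁻¹ R_{t0} d ∩ Sym_{α|β} ⊆ Sym_α}`. -/
def RSet {n : ℕ} {lam : List ℕ} (t0 : Tab n lam) (α β : List ℕ) : Set (Sym n) :=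
  {d | ∀ σ ∈ rowStab t0, d⁻¹ * σ * d ∈ youngSubgroup n (α ++ β) →
    d⁻¹ * σ * d ∈ symA n α β}

/-- `𝒞 = {d : d⁻¹ C_{t0} d ∩ Sym_{α|β} ⊆ Sym_β^{+|α|}}`. -/
def CSet {n : ℕ} {lam : List ℕ} (t0 : Tab n lam) (α β : List ℕ) : Set (Sym n) :=
  {d | ∀ σ ∈ colStab t0, d⁻¹ * σ * d ∈ youngSubgroup n (α ++ β) →
    d⁻¹ * σ * d ∈ symB n α β}

/-- The double coset `R_{t0} x Sym_{α|β}`. -/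
def dCoset {n : ℕ} {lam : List ℕ} (t0 : Tab n lam) (α β : List ℕ) (x : Sym n) :
    Set (Sym n) :=
  {ω | ∃ τ ∈ rowStab t0, ∃ ξ ∈ youngSubgroup n (α ++ β), ω = τ * x * ξ}

/-- The double coset `C_{t0} x Sym_{α|β}`. -/
def cCoset {n : ℕ} {lam : List ℕ} (t0 : Tab n lam) (α β : List ℕ) (x : Sym n) :
    Set (Sym n) :=
  {ω | ∃ σ ∈ colStab t0, ∃ ξ ∈ youngSubgroup n (α ++ β), ω = σ * x * ξ}

/-- `ε` is the sign function `ε_𝔡` on the double coset `R_{t0} 𝔡 Sym_{α|β}`: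
`ε(τ 𝔡 ξ_α ξ_β^{+|α|}) = sgn ξ_β`. -/
def IsEps {n : ℕ} {lam : List ℕ} (t0 : Tab n lam) (α β : List ℕ) (𝔡 : Sym n)
    (ε : Sym n → ℤ) : Prop :=
  ∀ τ ∈ rowStab t0, ∀ ξa ∈ symA n α β, ∀ ξb ∈ symB n α β,
    ε (τ * 𝔡 * (ξa * ξb)) = (Equiv.Perm.sign ξb : ℤ)

/-- The coefficient `𝔞_{d,𝔡} = ∑_{σ ∈ C_{t0}, σd ∈ R_{t0} 𝔡 Sym_{α|β}} sgn(σ) ε_𝔡(σ d)`. -/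
noncomputable def coeffA {n : ℕ} {lam : List ℕ} (t0 : Tab n lam) (α β : List ℕ)
    (ε : Sym n → ℤ) (d 𝔡 : Sym n) : ℤ :=
  ∑ σ : Sym n, if σ ∈ colStab t0 ∧ σ * d ∈ dCoset t0 α β 𝔡
    then (Equiv.Perm.sign σ : ℤ) * ε (σ * d) else 0

/-- The multiset of colours in column `j` of `T`. -/
def colMul {lam : List ℕ} (T : Cell lam → Colour) (j : ℕ) : Multiset Colour :=
  (Finset.univ.filter fun c : Cell lam => (c.2 : ℕ) = j).val.map T

noncomputable def sortedCol (m : Multiset Colour) : List Colour := m.sort (· ≤ ·)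

/-- Comparison of column multisets: the sorted lists agree up to position `k`, where
the first is larger. -/
def msGT (m m' : Multiset Colour) : Prop :=
  ∃ k, (∀ s, s < k → (sortedCol m).getD s (cCol 0) = (sortedCol m').getD s (cCol 0)) ∧
    (sortedCol m').getD k (cCol 0) < (sortedCol m).getD k (cCol 0)

/-- The strict column-dominance order `T ⊳ T'`. -/
def TabGT {lam : List ℕ} (T T' : Cell lam → Colour) : Prop :=
  ∃ t, (∀ j, j < t → colMul T j = colMul T' j) ∧ msGT (colMul T t) (colMul T' t)

/-- The column-dominance pre-order `T ⊵ T'`. -/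
def TabGE {lam : List ℕ} (T T' : Cell lam → Colour) : Prop :=
  (∀ j, colMul T j = colMul T' j) ∨ TabGT T T'

/-! `T_d` colours the node holding `a` by the block of `Sym_{α|β}` containing `d⁻¹ a`, so
`σ · T_d = T_d` exactly when `d⁻¹ σ d ∈ Sym_{α|β}`; this gives (a) ⇔ (b). For (c) ⇒ (a), a
`σ ∈ R_{t₀}` with `d⁻¹ σ d ∈ Sym_{α|β}` moving `i` makes the nodes holding `d i` and `σ (d i)` a
repeat in a row of `T_d`, of colour `c_k` only if `i < |α|`. For (a) ⇒ (c), a repeat at nodes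
`c, c'` yields the transposition `(t₀ c, t₀ c') ∈ R_{t₀}`, whose `d`-conjugate lies in
`Sym_{α|β}` and hence in `Sym_α`, forcing `d⁻¹ (t₀ c) < |α|`. -/

theorem le_countP_range_iff {p : ℕ → Prop} [DecidablePred p] (hp : Antitone p) {k m : ℕ}
    (hkm : k ≤ m) : k ≤ (List.range m).countP (fun j => decide (p j)) ↔ ∀ j < k, p j := by
  have hcard : (List.range m).countP (fun j => decide (p j)) = #{j ∈ range m | p j} := by
    rw [← Multiset.coe_countP, ← Multiset.range, Multiset.countP_eq_card_filter]
    rfl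
  rw [hcard]
  constructor
  · intro hk j hj
    by_contra hpj
    have hsub : {j ∈ range m | p j} ⊆ range j := fun i hi => by
      simp only [mem_filter, mem_range] at hi ⊢
      by_contra hij
      exact hpj (hp (not_lt.mp hij) hi.2)
    have := card_le_card hsub
    rw [card_range] at this
    omega
  · intro h
    calc k = #(range k) := (card_range k).symm
      _ ≤ _ := card_le_card fun i hi => by
        simp only [mem_filter, mem_range] at hi ⊢
        exact ⟨by omega, h i hi⟩

theorem blockOf_append_lt_iff (α β : List ℕ) (i : ℕ) :
    blockOf (α ++ β) i < α.length ↔ i < α.sum := by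
  have hmono := List.monotone_sum_take (α ++ β)
  have hanti : Antitone fun j => ((α ++ β).take (j + 1)).sum ≤ i :=
    fun j j' hj h => (hmono (Nat.succ_le_succ hj)).trans h
  rw [← not_le, ← not_le, not_iff_not, blockOf, le_countP_range_iff hanti (by simp)]
  constructor
  · intro h
    rcases Nat.eq_zero_or_pos α.length with h0 | h0
    · simp [List.length_eq_zero_iff.mp h0]
    · simpa [Nat.sub_add_cancel h0] using h (α.length - 1) (by omega)
  · intro h j hj
    calc ((α ++ β).take (j + 1)).sum ≤ ((α ++ β).take α.length).sum := hmono hj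
      _ = α.sum := by rw [List.take_left]
      _ ≤ i := h

theorem colourOfIdx_eq_iff (α β : List ℕ) (i j : ℕ) :
    colourOfIdx α β i = colourOfIdx α β j ↔ blockOf (α ++ β) i = blockOf (α ++ β) j := by
  refine ⟨fun h => ?_, fun h => by rw [colourOfIdx, colourOfIdx, h]⟩
  unfold colourOfIdx at h
  split_ifs at h <;> simp [cCol, dCol] at h <;> omega

theorem exists_colourOfIdx_eq_cCol_iff (α β : List ℕ) (i : ℕ) :
    (∃ k, colourOfIdx α β i = cCol k) ↔ i < α.sum := by
  rw [← blockOf_append_lt_iff α β i, colourOfIdx]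
  split_ifs with h <;> simp [h, cCol, dCol]

theorem mem_youngSubgroup {n : ℕ} {γ : List ℕ} {σ : Sym n} :
    σ ∈ youngSubgroup n γ ↔ ∀ i, blockOf γ (σ i) = blockOf γ i :=
  Iff.rfl

theorem swap_mem_youngSubgroup {n : ℕ} {γ : List ℕ} {x y : Fin n}
    (h : blockOf γ x = blockOf γ y) : swap x y ∈ youngSubgroup n γ := by
  intro i
  rw [swap_apply_def]
  split_ifs <;> simp_all

theorem lt_sum_of_swap_mem_symA {n : ℕ} {α β : List ℕ} {x y : Fin n} (hxy : x ≠ y)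
    (h : swap x y ∈ symA n α β) : (x : ℕ) < α.sum := by
  by_contra hx
  have hfix := h.2 x (not_lt.mp hx)
  rw [swap_apply_left] at hfix
  exact hxy hfix.symm

theorem cell_eq_iff_of_row_eq {lam : List ℕ} {c c' : Cell lam} (h : c.1 = c'.1) :
    c = c' ↔ (c.2 : ℕ) = c'.2 :=
  ⟨fun e => e ▸ rfl, fun e => Sigma.ext h ((Fin.heq_ext_iff (congrArg _ h)).2 e)⟩

section Tableaux

variable {n : ℕ} {lam : List ℕ} (t0 : Tab n lam) (α β : List ℕ)

theorem swap_mem_rowStab {c c' : Cell lam} (h : c.1 = c'.1) :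
    swap (t0 c) (t0 c') ∈ rowStab t0 := by
  intro a
  rw [swap_apply_def]
  split_ifs <;> simp_all

theorem actT_mul (σ τ : Sym n) (T : Cell lam → Colour) :
    actT t0 (σ * τ) T = actT t0 σ (actT t0 τ T) := by
  funext c
  simp [actT, mul_inv_rev]

theorem actT_TOf (σ d : Sym n) : actT t0 σ (TOf t0 α β d) = TOf t0 α β (σ * d) := by
  rw [TOf, TOf, actT_mul]

theorem TOf_apply (d : Sym n) (c : Cell lam) :
    TOf t0 α β d c = colourOfIdx α β (d⁻¹ (t0 c)) := by
  simp [TOf, actT, canonT]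

theorem exists_TOf_eq_cCol_iff (d : Sym n) (c : Cell lam) :
    (∃ k, TOf t0 α β d c = cCol k) ↔ (d⁻¹ (t0 c) : ℕ) < α.sum := by
  rw [TOf_apply, exists_colourOfIdx_eq_cCol_iff]

theorem TOf_eq_TOf_iff (x y : Sym n) :
    TOf t0 α β x = TOf t0 α β y ↔ y⁻¹ * x ∈ youngSubgroup n (α ++ β) := by
  simp only [funext_iff, TOf_apply, colourOfIdx_eq_iff, mem_youngSubgroup]
  constructor
  · intro h i
    simpa using (h (t0.symm (x i))).symm
  · intro h c
    simpa using (h (x⁻¹ (t0 c))).symm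

theorem actT_TOf_eq_self_iff (σ d : Sym n) :
    actT t0 σ (TOf t0 α β d) = TOf t0 α β d ↔ d⁻¹ * σ * d ∈ youngSubgroup n (α ++ β) := by
  rw [actT_TOf, TOf_eq_TOf_iff, mul_assoc]

theorem mem_RSet_iff_rowRepeatC (d : Sym n) :
    d ∈ RSet t0 α β ↔ RowRepeatC (TOf t0 α β d) := by
  constructor
  · intro hd c c' hrow hcol hT
    have hconj : d⁻¹ * swap (t0 c) (t0 c') * d = swap (d⁻¹ (t0 c)) (d⁻¹ (t0 c')) := by
      rw [swap_apply_apply, inv_inv]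
    rw [TOf_apply, TOf_apply, colourOfIdx_eq_iff] at hT
    have hA := hd _ (swap_mem_rowStab t0 hrow) (hconj ▸ swap_mem_youngSubgroup hT)
    have hne : d⁻¹ (t0 c) ≠ d⁻¹ (t0 c') := by
      simpa [cell_eq_iff_of_row_eq hrow] using hcol
    rw [exists_TOf_eq_cCol_iff]
    exact lt_sum_of_swap_mem_symA hne (hconj ▸ hA)
  · intro hc σ hσ hY
    refine ⟨hY, fun i hi => ?_⟩
    by_contra hmoved
    have hne : t0.symm (d i) ≠ t0.symm (σ (d i)) := fun h => hmoved (by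
      simp [← t0.symm.injective h])
    have hT : TOf t0 α β d (t0.symm (d i)) = TOf t0 α β d (t0.symm (σ (d i))) := by
      rw [TOf_apply, TOf_apply, colourOfIdx_eq_iff]
      simpa using (hY i).symm
    have hcol := mt (cell_eq_iff_of_row_eq (hσ (d i)).symm).2 hne
    have hlt := (exists_TOf_eq_cCol_iff t0 α β d _).1 (hc _ _ (hσ (d i)).symm hcol hT)
    simp only [apply_symm_apply, Perm.coe_inv, symm_apply_apply] at hlt
    omega

end Tableaux

theorem mem_RSet_iff_general (n : ℕ) (lam : List ℕ) (α β : List ℕ) (t0 : Tab n lam) (d : Sym n) :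
    (d ∈ RSet t0 α β ↔
      {σ | σ ∈ rowStab t0 ∧ actT t0 σ (TOf t0 α β d) = TOf t0 α β d} ⊆
        {x | ∃ ξ ∈ symA n α β, x = d * ξ * d⁻¹}) ∧
    (d ∈ RSet t0 α β ↔
      ∀ c c' : Cell lam, c.1 = c'.1 → (c.2 : ℕ) ≠ (c'.2 : ℕ) →
        TOf t0 α β d c = TOf t0 α β d c' → ∃ k, TOf t0 α β d c = cCol k) := by
  refine ⟨⟨fun hd σ ⟨hσ, hfix⟩ => ?_, fun hsub σ hσ hY => ?_⟩, mem_RSet_iff_rowRepeatC t0 α β d⟩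
  · refine ⟨d⁻¹ * σ * d, hd σ hσ ((actT_TOf_eq_self_iff t0 α β σ d).1 hfix), ?_⟩
    group
  · obtain ⟨ξ, hξ, rfl⟩ := hsub ⟨hσ, (actT_TOf_eq_self_iff t0 α β σ d).2 hY⟩
    simpa [mul_assoc] using hξ

/-- **Characterisation of `𝒮` (Lemma on `ℛ`).** For `d ∈ Sym n` the following are
equivalent: (a) `d ∈ ℛ`; (b) `stab_{R_{t0}}(T_d) ⊆ d Sym_α d⁻¹`; (c) any repeated colour
in a row of `T_d` is one of the colours `c_k`. -/
theorem mem_RSet_iff (n : ℕ) (lam : List ℕ) (hl : IsPartition n lam)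
    (α β : List ℕ) (hab : IsBicomp n α β) (t0 : Tab n lam) (d : Sym n) :
    (d ∈ RSet t0 α β ↔
      {σ | σ ∈ rowStab t0 ∧ actT t0 σ (TOf t0 α β d) = TOf t0 α β d} ⊆
        {x | ∃ ξ ∈ symA n α β, x = d * ξ * d⁻¹}) ∧
    (d ∈ RSet t0 α β ↔
      ∀ c c' : Cell lam, c.1 = c'.1 → (c.2 : ℕ) ≠ (c'.2 : ℕ) →
        TOf t0 α β d c = TOf t0 α β d c' → ∃ k, TOf t0 α β d c = cCol k) :=
  mem_RSet_iff_general n lam α β t0 d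

end SignedYoung
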